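/- arXiv:2510.14335 — 3 statements merged into one kernel-verified Lean document; each statement's English description precedes it below -/
import Mathlib

section
/- Let A ∈ ℝ^{N×N} be symmetric and M ∈ ℝ^{N×N} be diagonal and invertible. Suppose v, w : ℝ → ℝ^N satisfy the ODE system v' = M⁻¹ A w − β (v² + w²) ⊙ w and w' = −M⁻¹ A v + β (v² + w²) ⊙ v, where products and squares of vectors are componentwise. Then the discrete mass M(t) = vᵀ M v + wᵀ M w is constant in time. -/
/-!
Differentiating `vᵀ M v + wᵀ M w` along the flow and multiplying the equations by the
diagonal matrix `M` gives `2 (vᵀ A w - wᵀ A v) - 2β (vᵀ M (s ⊙ w) - wᵀ M (s ⊙ v))` with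
`s = v² + w²`. The first bracket vanishes because `A` is symmetric, the second because a
diagonal matrix commutes with componentwise multiplication.
-/

open Matrix

section Derivatives

variable {ι : Type*} [Fintype ι] {x y : ℝ → ι → ℝ} {x' y' : ι → ℝ} {t : ℝ}

theorem HasDerivAt.dotProduct (hx : HasDerivAt x x' t) (hy : HasDerivAt y y' t) :
    HasDerivAt (fun s => x s ⬝ᵥ y s) (x' ⬝ᵥ y t + x t ⬝ᵥ y') t :=
  (HasDerivAt.fun_sum fun i _ =>
    ((hasDerivAt_pi.mp hx) i).fun_mul ((hasDerivAt_pi.mp hy) i)).congr_deriv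
    Finset.sum_add_distrib

theorem HasDerivAt.mulVec {m : Type*} [Fintype m] (M : Matrix m ι ℝ)
    (hx : HasDerivAt x x' t) : HasDerivAt (fun s => M *ᵥ x s) (M *ᵥ x') t :=
  (mulVecLin M).toContinuousLinearMap.hasFDerivAt.comp_hasDerivAt t hx

theorem Matrix.IsSymm.dotProduct_mulVec_comm {R : Type*} [CommSemiring R]
    {A : Matrix ι ι R} (hA : A.IsSymm) (u u' : ι → R) :
    u ⬝ᵥ A *ᵥ u' = u' ⬝ᵥ A *ᵥ u := by
  rw [dotProduct_mulVec, ← mulVec_transpose, hA.eq, dotProduct_comm]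

theorem HasDerivAt.dotProduct_mulVec_self {M : Matrix ι ι ℝ} (hM : M.IsSymm)
    (hx : HasDerivAt x x' t) :
    HasDerivAt (fun s => x s ⬝ᵥ M *ᵥ x s) (2 * (x t ⬝ᵥ M *ᵥ x')) t :=
  (hx.dotProduct (hx.mulVec M)).congr_deriv <| by
    rw [hM.dotProduct_mulVec_comm, two_mul]

end Derivatives

section Algebra

variable {ι R : Type*} [Fintype ι] [DecidableEq ι] [CommRing R]

theorem dotProduct_diagonal_mulVec_mul_comm (d c u u' : ι → R) :
    u ⬝ᵥ diagonal d *ᵥ (c * u') = u' ⬝ᵥ diagonal d *ᵥ (c * u) := by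
  simp only [dotProduct, mulVec_diagonal, Pi.mul_apply]
  exact Finset.sum_congr rfl fun i _ => by ring

theorem dotProduct_diagonal_mulVec_nls_field_eq_zero {A : Matrix ι ι R} (hA : A.IsSymm)
    (d : ι → R) [Invertible (diagonal d)] (c u u' : ι → R) :
    u ⬝ᵥ diagonal d *ᵥ ((diagonal d)⁻¹ *ᵥ A *ᵥ u' - c * u')
      + u' ⬝ᵥ diagonal d *ᵥ (-((diagonal d)⁻¹ *ᵥ A *ᵥ u) + c * u) = 0 := by
  simp only [mulVec_sub, mulVec_add, mulVec_neg, mulVec_mulVec, ← Matrix.mul_assoc,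
    mul_inv_of_invertible, Matrix.one_mul, dotProduct_sub, dotProduct_add, dotProduct_neg]
  rw [hA.dotProduct_mulVec_comm u u', dotProduct_diagonal_mulVec_mul_comm d c u u']
  abel

end Algebra

/-- Semidiscrete mass conservation for the SBP semidiscretization of NLS:
if `A` is symmetric, `M` is diagonal and invertible, and
`v' = M⁻¹ A w − β (v² + w²) ⊙ w`, `w' = −M⁻¹ A v + β (v² + w²) ⊙ v`
(componentwise nonlinearity), then `vᵀ M v + wᵀ M w` is constant in time. -/
theorem semidiscrete_mass_conservation (N : ℕ) (β : ℝ)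
    (A M : Matrix (Fin N) (Fin N) ℝ) (hA : A.IsSymm)
    (d : Fin N → ℝ) (hM : M = Matrix.diagonal d) (hMinv : Invertible M)
    (v w : ℝ → Fin N → ℝ)
    (hv : ∀ t : ℝ, HasDerivAt v
      (M⁻¹.mulVec (A.mulVec (w t))
        - fun i => β * (v t i ^ 2 + w t i ^ 2) * w t i) t)
    (hw : ∀ t : ℝ, HasDerivAt w
      (-(M⁻¹.mulVec (A.mulVec (v t)))
        + fun i => β * (v t i ^ 2 + w t i ^ 2) * v t i) t) :
    ∀ t₁ t₂ : ℝ,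
      dotProduct (v t₁) (M.mulVec (v t₁))
        + dotProduct (w t₁) (M.mulVec (w t₁))
      = dotProduct (v t₂) (M.mulVec (v t₂))
        + dotProduct (w t₂) (M.mulVec (w t₂)) := by
  subst hM
  have hmass : ∀ t, HasDerivAt
      (fun s => v s ⬝ᵥ diagonal d *ᵥ v s + w s ⬝ᵥ diagonal d *ᵥ w s) 0 t := fun t =>
    (((hv t).dotProduct_mulVec_self (isSymm_diagonal d)).add
      ((hw t).dotProduct_mulVec_self (isSymm_diagonal d))).congr_deriv <| by
      rw [← mul_add]
      exact mul_eq_zero_of_right 2 (dotProduct_diagonal_mulVec_nls_field_eq_zero hA d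
        (fun i => β * (v t i ^ 2 + w t i ^ 2)) (v t) (w t))
  exact is_const_of_deriv_eq_zero (fun t => (hmass t).differentiableAt)
    (fun t => (hmass t).deriv)
end

section
/- Let M ∈ ℝ^{N×N} be diagonal with positive entries and A ∈ ℝ^{N×N} symmetric. Consider the map F : ℝ^{2N} → ℝ^{2N} given by F(v,w) = (M⁻¹A w − β(v²+w²)⊙w, −M⁻¹A v + β(v²+w²)⊙v). Then the mass functional μ(v,w) = vᵀMv + wᵀMw satisfies ∇μ(v,w) · F(v,w) = 0 for all (v,w), i.e., μ is a first integral of the semidiscrete vector field. -/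
/-! Expanding `∇μ · F`, the factor `M` of the gradient cancels the `M⁻¹` in `F`, so the linear
part contributes `2 (v ⬝ Aw − w ⬝ Av)`, which vanishes because `A` is symmetric. Since `M` is
diagonal, `(Mv) ⬝ (c ⊙ w) = ∑ dᵢ cᵢ vᵢ wᵢ = (Mw) ⬝ (c ⊙ v)` for any weight `c`, so the two
cubic terms cancel as well. -/

open Matrix

namespace Matrix

variable {n R : Type*} [Fintype n]

theorem IsSymm.dotProduct_mulVec_comm_s15 [CommSemiring R] {A : Matrix n n R} (hA : A.IsSymm)
    (x y : n → R) : x ⬝ᵥ A *ᵥ y = y ⬝ᵥ A *ᵥ x := by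
  rw [dotProduct_mulVec, ← mulVec_transpose, hA.eq, dotProduct_comm]

theorem IsSymm.mulVec_dotProduct_inv_mulVec [DecidableEq n] [CommRing R] {M : Matrix n n R}
    (hM : M.IsSymm) (hdet : IsUnit M.det) (x y : n → R) : M *ᵥ x ⬝ᵥ M⁻¹ *ᵥ y = x ⬝ᵥ y := by
  rw [← vecMul_transpose, ← dotProduct_mulVec, mulVec_mulVec, hM.eq, mul_nonsing_inv M hdet,
    one_mulVec]

theorem diagonal_mulVec_dotProduct_mul_comm [DecidableEq n] [CommSemiring R] (d c x y : n → R) :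
    diagonal d *ᵥ x ⬝ᵥ (fun i => c i * y i) = diagonal d *ᵥ y ⬝ᵥ (fun i => c i * x i) := by
  simp only [dotProduct, mulVec_diagonal]
  exact Finset.sum_congr rfl fun i _ => by ring

end Matrix

/-- The discrete mass `μ(v,w) = vᵀMv + wᵀMw` is a first integral of the SBP
semidiscretization of NLS: with `F(v,w) = (M⁻¹A w − β(v²+w²)⊙w, −M⁻¹A v + β(v²+w²)⊙v)`
and gradient `∇μ(v,w) = (2Mv, 2Mw)`, one has `∇μ(v,w) · F(v,w) = 0`. -/
theorem mass_first_integral_of_semidiscretization (N : ℕ) (β : ℝ)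
    (A M : Matrix (Fin N) (Fin N) ℝ) (hA : A.IsSymm)
    (d : Fin N → ℝ) (hd : ∀ i, 0 < d i) (hM : M = Matrix.diagonal d) :
    ∀ v w : Fin N → ℝ,
      dotProduct ((2 : ℝ) • M.mulVec v)
        (M⁻¹.mulVec (A.mulVec w) - fun i => β * (v i ^ 2 + w i ^ 2) * w i)
      + dotProduct ((2 : ℝ) • M.mulVec w)
        (-(M⁻¹.mulVec (A.mulVec v)) + fun i => β * (v i ^ 2 + w i ^ 2) * v i)
      = 0 := by
  intro v w
  subst hM
  have hdet : IsUnit (diagonal d).det := by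
    rw [det_diagonal]
    exact isUnit_iff_ne_zero.mpr (Finset.prod_ne_zero_iff.mpr fun i _ => (hd i).ne')
  have hcancel := (isSymm_diagonal d).mulVec_dotProduct_inv_mulVec hdet
  simp only [smul_dotProduct, dotProduct_sub, dotProduct_add, dotProduct_neg, hcancel,
    hA.dotProduct_mulVec_comm_s15 v w,
    diagonal_mulVec_dotProduct_mul_comm d (fun i => β * (v i ^ 2 + w i ^ 2)) v w]
  ring
end

section
/- Let q⁰, q¹ : ℝ² → ℂ be smooth, spatially periodic solutions of the hyperbolized NLS system i q⁰_t + q¹_x = −β|q⁰|²q⁰, i τ q¹_t − q⁰_x = −q¹, with τ > 0 and β ∈ ℝ. Then the mass M(t) = ∫ (|q⁰|² + τ|q¹|²) dx is constant in time. -/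
open MeasureTheory


noncomputable def ptd (q : ℝ → ℝ → ℂ) (t x : ℝ) : ℂ :=
  fderiv ℝ (Function.uncurry q) (t, x) (1, 0)

noncomputable def pxd (q : ℝ → ℝ → ℂ) (t x : ℝ) : ℂ :=
  fderiv ℝ (Function.uncurry q) (t, x) (0, 1)

lemma hasDerivAt_norm_sq' {u : ℝ → ℂ} {u' : ℂ} {t : ℝ} (h : HasDerivAt u u' t) :
    HasDerivAt (fun s => ‖u s‖ ^ 2) (2 * ((starRingEnd ℂ) (u t) * u').re) t := by
  have hre : HasDerivAt (fun s => (u s).re) u'.re t :=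
    (Complex.reCLM.hasFDerivAt.comp_hasDerivAt t h)
  have him : HasDerivAt (fun s => (u s).im) u'.im t :=
    (Complex.imCLM.hasFDerivAt.comp_hasDerivAt t h)
  have h2 : HasDerivAt (fun s => (u s).re ^ 2 + (u s).im ^ 2)
      (2 * (u t).re * u'.re + 2 * (u t).im * u'.im) t := by
    have := ((hre.pow 2).add (him.pow 2))
    refine this.congr_deriv ?_
    push_cast
    ring
  have heq : (fun s => ‖u s‖ ^ 2) = fun s => (u s).re ^ 2 + (u s).im ^ 2 := by
    funext s
    rw [Complex.sq_norm, Complex.normSq_apply]; ring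
  rw [heq]
  convert h2 using 1
  simp [Complex.mul_re]
  ring

lemma partial_t' {q : ℝ → ℝ → ℂ} (hs : ContDiff ℝ (⊤ : ℕ∞) (Function.uncurry q)) (t x : ℝ) :
    HasDerivAt (fun s => q s x) (ptd q t x) t := by
  have hF : HasFDerivAt (Function.uncurry q) (fderiv ℝ (Function.uncurry q) (t, x)) (t, x) :=
    (hs.differentiable (by simp) (t, x)).hasFDerivAt
  have hline : HasDerivAt (fun s : ℝ => (s, x)) ((1 : ℝ), (0 : ℝ)) t :=
    (hasDerivAt_id t).prodMk (hasDerivAt_const t x)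
  exact hF.comp_hasDerivAt t hline

lemma partial_x' {q : ℝ → ℝ → ℂ} (hs : ContDiff ℝ (⊤ : ℕ∞) (Function.uncurry q)) (t x : ℝ) :
    HasDerivAt (fun y => q t y) (pxd q t x) x := by
  have hF : HasFDerivAt (Function.uncurry q) (fderiv ℝ (Function.uncurry q) (t, x)) (t, x) :=
    (hs.differentiable (by simp) (t, x)).hasFDerivAt
  have hline : HasDerivAt (fun y : ℝ => (t, y)) ((0 : ℝ), (1 : ℝ)) x :=
    (hasDerivAt_const x t).prodMk (hasDerivAt_id x)
  exact hF.comp_hasDerivAt x hline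

lemma cont_ptd' {q : ℝ → ℝ → ℂ} (hs : ContDiff ℝ (⊤ : ℕ∞) (Function.uncurry q)) :
    Continuous (fun p : ℝ × ℝ => ptd q p.1 p.2) :=
  (hs.continuous_fderiv (by simp)).clm_apply continuous_const


/-- Mass conservation for smooth spatially periodic solutions of the hyperbolized
NLS system `i q⁰_t + q¹_x = −β|q⁰|²q⁰`, `i τ q¹_t − q⁰_x = −q¹`:
`M(t) = ∫ (|q⁰|² + τ|q¹|²) dx` is constant in time. -/
theorem hyperbolized_nls_continuous_mass_conservation
    (β τ L : ℝ) (hτ : 0 < τ) (hL : 0 < L)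
    (q0 q1 : ℝ → ℝ → ℂ)
    (hs0 : ContDiff ℝ (⊤ : ℕ∞) (Function.uncurry q0))
    (hs1 : ContDiff ℝ (⊤ : ℕ∞) (Function.uncurry q1))
    (hper0 : ∀ t x : ℝ, q0 t (x + L) = q0 t x)
    (hper1 : ∀ t x : ℝ, q1 t (x + L) = q1 t x)
    (hpde0 : ∀ t x : ℝ, Complex.I * deriv (fun s => q0 s x) t
      + deriv (q1 t) x = -(β : ℂ) * ((‖q0 t x‖ ^ 2 : ℝ) : ℂ) * q0 t x)
    (hpde1 : ∀ t x : ℝ, Complex.I * (τ : ℂ) * deriv (fun s => q1 s x) t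
      - deriv (q0 t) x = -(q1 t x)) :
    ∀ t₁ t₂ : ℝ,
      (∫ x in (0:ℝ)..L, (‖q0 t₁ x‖ ^ 2 + τ * ‖q1 t₁ x‖ ^ 2))
        = ∫ x in (0:ℝ)..L, (‖q0 t₂ x‖ ^ 2 + τ * ‖q1 t₂ x‖ ^ 2) := by
  have hτc : (τ : ℂ) ≠ 0 := by exact_mod_cast hτ.ne'
  -- PDEs in terms of ptd/pxd
  have hpde0' : ∀ t x : ℝ, Complex.I * ptd q0 t x + pxd q1 t x
      = -(β : ℂ) * ((‖q0 t x‖ ^ 2 : ℝ) : ℂ) * q0 t x := by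
    intro t x
    rw [← (partial_t' hs0 t x).deriv, ← (partial_x' hs1 t x).deriv]
    exact hpde0 t x
  have hpde1' : ∀ t x : ℝ, Complex.I * (τ : ℂ) * ptd q1 t x - pxd q0 t x = -(q1 t x) := by
    intro t x
    rw [← (partial_t' hs1 t x).deriv, ← (partial_x' hs0 t x).deriv]
    exact hpde1 t x
  -- solved forms
  have ht0 : ∀ t x : ℝ, ptd q0 t x = Complex.I * pxd q1 t x
      + Complex.I * (β : ℂ) * ((‖q0 t x‖ ^ 2 : ℝ) : ℂ) * q0 t x := by
    intro t x
    linear_combination (-Complex.I) * hpde0' t x + (ptd q0 t x) * Complex.I_sq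
  have ht1 : ∀ t x : ℝ, ptd q1 t x
      = -Complex.I * (((τ⁻¹ : ℝ)) : ℂ) * (pxd q0 t x - q1 t x) := by
    intro t x
    have hττ : ((τ : ℝ) : ℂ) * (((τ⁻¹ : ℝ)) : ℂ) = 1 := by
      push_cast
      field_simp
    linear_combination (-Complex.I * (((τ⁻¹ : ℝ)) : ℂ)) * hpde1' t x
      + (ptd q1 t x * (τ : ℂ) * (((τ⁻¹ : ℝ)) : ℂ)) * Complex.I_sq
      + (-(ptd q1 t x)) * hττ
  have hf_t : ∀ t x : ℝ, HasDerivAt (fun s => ‖q0 s x‖ ^ 2 + τ * ‖q1 s x‖ ^ 2)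
      (2 * ((starRingEnd ℂ) (q0 t x) * ptd q0 t x).re
        + τ * (2 * ((starRingEnd ℂ) (q1 t x) * ptd q1 t x).re)) t := fun t x =>
    (hasDerivAt_norm_sq' (partial_t' hs0 t x)).add
      ((hasDerivAt_norm_sq' (partial_t' hs1 t x)).const_mul τ)
  have hFx : ∀ t x : ℝ,
      HasDerivAt (fun y => 2 * (Complex.I * ((starRingEnd ℂ) (q0 t y) * q1 t y)).re)
      (2 * (Complex.I * ((starRingEnd ℂ) (pxd q0 t x) * q1 t x
        + (starRingEnd ℂ) (q0 t x) * pxd q1 t x)).re) x := by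
    intro t x
    have h0 := partial_x' hs0 t x
    have h1 := partial_x' hs1 t x
    have hc : HasDerivAt (fun y => (starRingEnd ℂ) (q0 t y)) ((starRingEnd ℂ) (pxd q0 t x)) x := by
      have := (Complex.conjCLE.toContinuousLinearMap.hasFDerivAt
        (x := q0 t x)).comp_hasDerivAt x h0
      exact this
    have hm := hc.mul h1
    have hIm := hm.const_mul Complex.I
    have hre := Complex.reCLM.hasFDerivAt.comp_hasDerivAt x hIm
    exact hre.const_mul (2 : ℝ)
  have hkey : ∀ t x : ℝ,
      (2 * ((starRingEnd ℂ) (q0 t x) * ptd q0 t x).re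
        + τ * (2 * ((starRingEnd ℂ) (q1 t x) * ptd q1 t x).re))
      = 2 * (Complex.I * ((starRingEnd ℂ) (pxd q0 t x) * q1 t x
        + (starRingEnd ℂ) (q0 t x) * pxd q1 t x)).re := by
    intro t x
    rw [ht0 t x, ht1 t x]
    simp only [Complex.mul_re, Complex.mul_im, Complex.add_re, Complex.add_im, Complex.sub_re,
      Complex.sub_im, Complex.I_re, Complex.I_im, Complex.conj_re, Complex.conj_im,
      Complex.neg_re, Complex.neg_im, Complex.ofReal_re, Complex.ofReal_im]
    field_simp
    ring
  -- continuity facts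
  have hc0 : Continuous (fun p : ℝ × ℝ => q0 p.1 p.2) := hs0.continuous
  have hc1 : Continuous (fun p : ℝ × ℝ => q1 p.1 p.2) := hs1.continuous
  have hcp0 : Continuous (fun p : ℝ × ℝ => ptd q0 p.1 p.2) := cont_ptd' hs0
  have hcp1 : Continuous (fun p : ℝ × ℝ => ptd q1 p.1 p.2) := cont_ptd' hs1
  have hgc : Continuous (fun p : ℝ × ℝ =>
      2 * ((starRingEnd ℂ) (q0 p.1 p.2) * ptd q0 p.1 p.2).re
        + τ * (2 * ((starRingEnd ℂ) (q1 p.1 p.2) * ptd q1 p.1 p.2).re)) := by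
    exact (continuous_const.mul
        (Complex.continuous_re.comp ((continuous_star.comp hc0).mul hcp0))).add
      (continuous_const.mul (continuous_const.mul
        (Complex.continuous_re.comp ((continuous_star.comp hc1).mul hcp1))))
  have hfc : ∀ t : ℝ, Continuous fun x => ‖q0 t x‖ ^ 2 + τ * ‖q1 t x‖ ^ 2 := by
    intro t
    exact (((hc0.comp (continuous_const.prodMk continuous_id)).norm.pow 2)).add
      (continuous_const.mul ((hc1.comp (continuous_const.prodMk continuous_id)).norm.pow 2))
  have hgct : ∀ t : ℝ, Continuous fun x =>
      2 * ((starRingEnd ℂ) (q0 t x) * ptd q0 t x).re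
        + τ * (2 * ((starRingEnd ℂ) (q1 t x) * ptd q1 t x).re) := by
    intro t
    exact hgc.comp (continuous_const.prodMk continuous_id)
  -- derivative of the mass is zero
  have key : ∀ t₀ : ℝ,
      HasDerivAt (fun t => ∫ x in (0:ℝ)..L, (‖q0 t x‖ ^ 2 + τ * ‖q1 t x‖ ^ 2)) 0 t₀ := by
    intro t₀
    obtain ⟨C, hC⟩ := ((isCompact_Icc (a := t₀ - 1) (b := t₀ + 1)).prod
      (isCompact_uIcc (a := (0:ℝ)) (b := L))).exists_bound_of_continuousOn hgc.continuousOn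
    have main := intervalIntegral.hasDerivAt_integral_of_dominated_loc_of_deriv_le
      (𝕜 := ℝ) (μ := volume) (a := 0) (b := L)
      (F := fun t x => ‖q0 t x‖ ^ 2 + τ * ‖q1 t x‖ ^ 2)
      (F' := fun t x => 2 * ((starRingEnd ℂ) (q0 t x) * ptd q0 t x).re
        + τ * (2 * ((starRingEnd ℂ) (q1 t x) * ptd q1 t x).re))
      (x₀ := t₀) (bound := fun _ => C) (Metric.ball_mem_nhds t₀ one_pos)
      (Filter.Eventually.of_forall fun t => (hfc t).aestronglyMeasurable)
      ((hfc t₀).intervalIntegrable 0 L)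
      ((hgct t₀).aestronglyMeasurable)
      (ae_of_all _ fun x hx t ht => by
        refine hC (t, x) ⟨?_, Set.Ioc_subset_Icc_self hx⟩
        have := Metric.mem_ball.mp ht
        rw [Real.dist_eq] at this
        constructor <;> [linarith [abs_lt.mp this]; linarith [abs_lt.mp this]])
      (intervalIntegrable_const)
      (ae_of_all _ fun x _ t _ => hf_t t x)
    have hzero : (∫ x in (0:ℝ)..L,
        (2 * ((starRingEnd ℂ) (q0 t₀ x) * ptd q0 t₀ x).re
          + τ * (2 * ((starRingEnd ℂ) (q1 t₀ x) * ptd q1 t₀ x).re))) = 0 := by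
      have hder : ∀ x ∈ Set.uIcc (0:ℝ) L,
          HasDerivAt (fun y => 2 * (Complex.I * ((starRingEnd ℂ) (q0 t₀ y) * q1 t₀ y)).re)
          (2 * ((starRingEnd ℂ) (q0 t₀ x) * ptd q0 t₀ x).re
            + τ * (2 * ((starRingEnd ℂ) (q1 t₀ x) * ptd q1 t₀ x).re)) x := by
        intro x _
        rw [hkey t₀ x]
        exact hFx t₀ x
      rw [intervalIntegral.integral_eq_sub_of_hasDerivAt hder
        ((hgct t₀).intervalIntegrable 0 L)]
      have e0 : q0 t₀ L = q0 t₀ 0 := by rw [← zero_add L]; exact hper0 t₀ 0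
      have e1 : q1 t₀ L = q1 t₀ 0 := by rw [← zero_add L]; exact hper1 t₀ 0
      rw [e0, e1, sub_self]
    have h2 := main.2
    rw [hzero] at h2
    exact h2
  intro t₁ t₂
  exact is_const_of_deriv_eq_zero (fun t => (key t).differentiableAt)
    (fun t => (key t).deriv) t₁ t₂
end
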